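/- arXiv:2311.17899 — 5 statements merged into one kernel-verified Lean document; each statement's English description precedes it below -/
import Mathlib

section
/- For t ≠ 0, the linear map diag(1, e^t, e^{-t}) maps the lattice Ξ_t = ℤ(1,0,0) + ℤ(0,1,1) + ℤ(0,e^t,e^{-t}) into itself bijectively, provided e^t + e^{-t} is an integer. -/
/-!
Write `a = e^t`, `b = e^{-t}`, so `a b = 1` and `a + b = m ∈ ℤ`. Then `a² = m a - 1` and
`b² = m b - 1`, so `diag(1, a, b)` fixes `(1,0,0)` and acts on `ℤ(0,1,1) + ℤ(0,a,b)` by an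
integer matrix of determinant one; its inverse `diag(1, b, a)` preserves the lattice as well.
-/

open Set Matrix

theorem Submodule.mapsTo_span_of_mapsTo {R M N : Type*} [Semiring R] [AddCommMonoid M]
    [AddCommMonoid N] [Module R M] [Module R N] (f : M →ₗ[R] N) {s : Set M} {p : Submodule R N}
    (h : MapsTo f s p) : MapsTo f (span R s) p :=
  fun _ hx => (span_le (p := p.comap f)).mpr h hx

theorem Matrix.leftInverse_diagonal_mulVec {n R : Type*} [Fintype n] [DecidableEq n]
    [CommSemiring R] {d d' : n → R} (h : ∀ i, d' i * d i = 1) :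
    Function.LeftInverse (diagonal d').mulVec (diagonal d).mulVec := fun x => by
  rw [mulVec_mulVec, diagonal_mul_diagonal, funext h, diagonal_one, one_mulVec]

theorem Matrix.diagonal_mulVec_vec3 {R : Type*} [CommSemiring R] (d : Fin 3 → R) (x y z : R) :
    diagonal d *ᵥ ![x, y, z] = ![d 0 * x, d 1 * y, d 2 * z] := by
  ext i
  fin_cases i <;> simp [mulVec_diagonal]

section XiLattice

variable {R : Type*} [CommRing R] (a b : R)

def xiLattice : Submodule ℤ (Fin 3 → R) :=
  Submodule.span ℤ {![1, 0, 0], ![0, 1, 1], ![0, a, b]}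

theorem one_zero_zero_mem_xiLattice : ![1, 0, 0] ∈ xiLattice a b :=
  Submodule.subset_span (by simp)

theorem zero_one_one_mem_xiLattice : ![0, 1, 1] ∈ xiLattice a b :=
  Submodule.subset_span (by simp)

theorem zero_a_b_mem_xiLattice : ![0, a, b] ∈ xiLattice a b :=
  Submodule.subset_span (by simp)

theorem mapsTo_diagonal_xiLattice {d : Fin 3 → R} (h0 : d 0 = 1)
    (hu : ![0, d 1, d 2] ∈ xiLattice a b) (hv : ![0, d 1 * a, d 2 * b] ∈ xiLattice a b) :
    MapsTo (diagonal d).mulVec (xiLattice a b) (xiLattice a b) := by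
  refine Submodule.mapsTo_span_of_mapsTo ((mulVecLin _).restrictScalars ℤ) ?_
  rintro x (rfl | rfl | rfl) <;>
    simp only [LinearMap.coe_restrictScalars, mulVecLin_apply, SetLike.mem_coe,
      diagonal_mulVec_vec3, h0, mul_one, mul_zero]
  exacts [one_zero_zero_mem_xiLattice a b, hu, hv]

variable {a b}

theorem bijOn_diagonal_xiLattice (hab : a * b = 1) {m : ℤ} (hm : (m : R) = a + b) :
    BijOn (diagonal ![1, a, b]).mulVec (xiLattice a b) (xiLattice a b) := by
  have hzsmul (x : Fin 3 → R) : m • x = (m : R) • x := (Int.cast_smul_eq_zsmul R m x).symm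
  have hinv : ∀ i, ![1, b, a] i * ![1, a, b] i = 1 := by
    intro i; fin_cases i <;> simp [hab, mul_comm]
  have hinv' : ∀ i, ![1, a, b] i * ![1, b, a] i = 1 := by
    intro i; fin_cases i <;> simp [hab, mul_comm]
  have hsq : ![0, a * a, b * b] = m • ![0, a, b] - ![0, 1, 1] := by
    ext i; fin_cases i <;> simp [hzsmul, hm] <;> linear_combination -hab
  have hswap : ![0, b, a] = m • ![0, 1, 1] - ![0, a, b] := by
    ext i; fin_cases i <;> simp [hzsmul, hm]
  have hmaps : MapsTo (diagonal ![1, a, b]).mulVec (xiLattice a b) (xiLattice a b) := by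
    refine mapsTo_diagonal_xiLattice a b rfl (zero_a_b_mem_xiLattice a b) ?_
    change ![0, a * a, b * b] ∈ xiLattice a b
    rw [hsq]
    exact sub_mem (zsmul_mem (zero_a_b_mem_xiLattice a b) m) (zero_one_one_mem_xiLattice a b)
  have hmaps' : MapsTo (diagonal ![1, b, a]).mulVec (xiLattice a b) (xiLattice a b) := by
    refine mapsTo_diagonal_xiLattice a b rfl ?_ ?_
    · change ![0, b, a] ∈ xiLattice a b
      rw [hswap]
      exact sub_mem (zsmul_mem (zero_one_one_mem_xiLattice a b) m) (zero_a_b_mem_xiLattice a b)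
    · change ![0, b * a, a * b] ∈ xiLattice a b
      rw [mul_comm b, hab]
      exact zero_one_one_mem_xiLattice a b
  exact InvOn.bijOn ⟨(leftInverse_diagonal_mulVec hinv).leftInvOn _,
    (leftInverse_diagonal_mulVec hinv').leftInvOn _⟩ hmaps hmaps'

end XiLattice

theorem stmt3_general (t : ℝ) (h : ∃ m : ℤ, (m : ℝ) = Real.exp t + Real.exp (-t)) :
    Set.BijOn (Matrix.diagonal ![1, Real.exp t, Real.exp (-t)]).mulVec
      (Submodule.span ℤ
        ({![1, 0, 0], ![0, 1, 1], ![0, Real.exp t, Real.exp (-t)]} : Set (Fin 3 → ℝ)))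
      (Submodule.span ℤ
        ({![1, 0, 0], ![0, 1, 1], ![0, Real.exp t, Real.exp (-t)]} : Set (Fin 3 → ℝ))) := by
  obtain ⟨m, hm⟩ := h
  have hexp : Real.exp t * Real.exp (-t) = 1 := by
    rw [← Real.exp_add, add_neg_cancel, Real.exp_zero]
  exact bijOn_diagonal_xiLattice hexp hm

theorem stmt3 (t : ℝ) (ht : t ≠ 0) (h : ∃ m : ℤ, (m : ℝ) = Real.exp t + Real.exp (-t)) :
    Set.BijOn (Matrix.diagonal ![1, Real.exp t, Real.exp (-t)]).mulVec
      (Submodule.span ℤ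
        ({![1, 0, 0], ![0, 1, 1], ![0, Real.exp t, Real.exp (-t)]} : Set (Fin 3 → ℝ)))
      (Submodule.span ℤ
        ({![1, 0, 0], ![0, 1, 1], ![0, Real.exp t, Real.exp (-t)]} : Set (Fin 3 → ℝ))) :=
  stmt3_general t h
end

section
/- For λ ∈ ℝ \ {0,1}, the map α sending the Heisenberg group element (x₁,x₂,x₃) to the affine map v ↦ [[1,0,0],[0,1,0],[x₂,x₁,1]]·v + (x₁, λx₂, (λ-1)x₃ + x₁x₂) is a group homomorphism from ℋ₃(ℝ) to Aff(ℝ³). -/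
/-- The Heisenberg group product on ℝ³ (coordinates (x₁,x₂,x₃)). -/
def h3Mul (a b : ℝ × ℝ × ℝ) : ℝ × ℝ × ℝ :=
  (a.1 + b.1, a.2.1 + b.2.1, a.2.2 + b.2.2 + a.1 * b.2.1)

/-- The affine map v ↦ [[1,0,0],[0,1,0],[x₂,x₁,1]]·v + (x₁, λx₂, (λ-1)x₃ + x₁x₂). -/
def alphaTw (l : ℝ) (g : ℝ × ℝ × ℝ) (v : Fin 3 → ℝ) : Fin 3 → ℝ :=
  ![v 0 + g.1, v 1 + l * g.2.1,
    g.2.1 * v 0 + g.1 * v 1 + v 2 + (l - 1) * g.2.2 + g.1 * g.2.1]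

namespace AlphaTw

variable (l : ℝ) (g h : ℝ × ℝ × ℝ)

theorem map_h3Mul : alphaTw l (h3Mul g h) = alphaTw l g ∘ alphaTw l h := by
  funext v i
  fin_cases i <;> simp [alphaTw, h3Mul] <;> ring

def linearPart : Matrix (Fin 3) (Fin 3) ℝ :=
  !![1, 0, 0; 0, 1, 0; g.2.1, g.1, 1]

def translationPart : Fin 3 → ℝ :=
  ![g.1, l * g.2.1, (l - 1) * g.2.2 + g.1 * g.2.1]

theorem det_linearPart : (linearPart g).det = 1 := by
  simp [linearPart, Matrix.det_fin_three]

theorem eq_mulVec_add (v : Fin 3 → ℝ) :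
    alphaTw l g v = (linearPart g).mulVec v + translationPart l g := by
  funext i
  fin_cases i <;> simp [alphaTw, linearPart, translationPart, dotProduct, Fin.sum_univ_three]
  ring

end AlphaTw

theorem stmt9_general (l : ℝ) :
    (∀ g h : ℝ × ℝ × ℝ, alphaTw l (h3Mul g h) = alphaTw l g ∘ alphaTw l h) ∧
      (∀ g : ℝ × ℝ × ℝ, ∃ (A : Matrix (Fin 3) (Fin 3) ℝ) (b : Fin 3 → ℝ),
        IsUnit A.det ∧ ∀ v, alphaTw l g v = A.mulVec v + b) :=
  ⟨AlphaTw.map_h3Mul l, fun g =>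
    ⟨AlphaTw.linearPart g, AlphaTw.translationPart l g,
      (AlphaTw.det_linearPart g).symm ▸ isUnit_one, AlphaTw.eq_mulVec_add l g⟩⟩

theorem stmt9 (l : ℝ) (hl0 : l ≠ 0) (hl1 : l ≠ 1) :
    (∀ g h : ℝ × ℝ × ℝ, alphaTw l (h3Mul g h) = alphaTw l g ∘ alphaTw l h) ∧
      (∀ g : ℝ × ℝ × ℝ, ∃ (A : Matrix (Fin 3) (Fin 3) ℝ) (b : Fin 3 → ℝ),
        IsUnit A.det ∧ ∀ v, alphaTw l g v = A.mulVec v + b) :=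
  stmt9_general l
end

section
/- In the Lie coalgebra with structure equations de¹ = -e³∧e⁵, de² = -e³∧e⁴, de³ = de⁴ = de⁵ = de⁶ = 0, the real part of the complex 3-form Ω = (e¹ + ie⁴)∧(e² + ie⁵)∧(e³ + ie⁶) is closed: d Re Ω = 0. -/
open ExteriorAlgebra

/-- Basis 1-forms e¹,…,e⁶ (indexed 0,…,5). -/
noncomputable def e (i : Fin 6) : ExteriorAlgebra ℝ (Fin 6 → ℝ) :=
  ExteriorAlgebra.ι ℝ (Pi.single i 1)

namespace ExteriorAlgebra

variable {R M : Type*} [CommRing R] [AddCommGroup M] [Module R M]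

/-- Moving the right-hand `ι R x` leftwards past each generator of `w` only changes signs, until
it meets the left-hand one. -/
theorem ι_mul_mul_ι_self (x : M) (w : ExteriorAlgebra R M) : ι R x * w * ι R x = 0 := by
  induction w using CliffordAlgebra.right_induction with
  | algebraMap r => rw [← Algebra.commutes r (ι R x), mul_assoc, ι_sq_zero, mul_zero]
  | add a b ha hb => rw [mul_add, add_mul, ha, hb, add_zero]
  | mul_ι m w hw =>
    rw [← mul_assoc, CliffordAlgebra.mul_ι_mul_ι_of_isOrtho _ (.all m x), hw, zero_mul, neg_zero]

theorem map_ι_mul_ι_mul_ι (d : ExteriorAlgebra R M →ₗ[R] ExteriorAlgebra R M)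
    (hder : ∀ (x : M) (ω : ExteriorAlgebra R M), d (ι R x * ω) = d (ι R x) * ω - ι R x * d ω)
    (x y z : M) :
    d (ι R x * ι R y * ι R z) =
      d (ι R x) * ι R y * ι R z - ι R x * d (ι R y) * ι R z + ι R x * ι R y * d (ι R z) := by
  rw [mul_assoc, hder, hder]
  noncomm_ring

end ExteriorAlgebra

theorem stmt13_general
    (d : ExteriorAlgebra ℝ (Fin 6 → ℝ) →ₗ[ℝ] ExteriorAlgebra ℝ (Fin 6 → ℝ))
    (hder : ∀ (x : Fin 6 → ℝ) (ω : ExteriorAlgebra ℝ (Fin 6 → ℝ)),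
      d (ExteriorAlgebra.ι ℝ x * ω) = d (ExteriorAlgebra.ι ℝ x) * ω -
        ExteriorAlgebra.ι ℝ x * d ω)
    (h1 : d (e 0) = -(e 2 * e 4))
    (h2 : d (e 1) = -(e 2 * e 3))
    (h3 : d (e 2) = 0) (h4 : d (e 3) = 0) (h5 : d (e 4) = 0) (h6 : d (e 5) = 0) :
    d (e 0 * e 1 * e 2 - e 0 * e 4 * e 5 - e 3 * e 1 * e 5 - e 3 * e 4 * e 2) = 0 := by
  have leibniz (i j k : Fin 6) :
      d (e i * e j * e k) = d (e i) * e j * e k - e i * d (e j) * e k + e i * e j * d (e k) :=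
    map_ι_mul_ι_mul_ι d hder _ _ _
  have e_mul_mul_e_self (i : Fin 6) (w : ExteriorAlgebra ℝ (Fin 6 → ℝ)) : e i * w * e i = 0 :=
    ι_mul_mul_ι_self _ w
  -- after the Leibniz expansion every surviving monomial contains some `e i` twice
  have e2_e4_e1_e2 : e 2 * e 4 * e 1 * e 2 = 0 := by rw [mul_assoc (e 2), e_mul_mul_e_self]
  have e0_e2_e3_e2 : e 0 * (e 2 * e 3) * e 2 = 0 := by rw [mul_assoc, e_mul_mul_e_self, mul_zero]
  have e2_e4_e4_e5 : e 2 * e 4 * e 4 * e 5 = 0 := by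
    rw [mul_assoc (e 2), show e 4 * e 4 = 0 from ι_sq_zero _, mul_zero, zero_mul]
  have e3_e2_e3_e5 : e 3 * (e 2 * e 3) * e 5 = 0 := by rw [← mul_assoc, e_mul_mul_e_self, zero_mul]
  rw [map_sub, map_sub, map_sub, leibniz, leibniz, leibniz, leibniz, h1, h2, h3, h4, h5, h6]
  simp only [neg_mul, mul_neg, mul_zero, zero_mul, e2_e4_e1_e2, e0_e2_e3_e2, e2_e4_e4_e5,
    e3_e2_e3_e5, neg_zero, add_zero, sub_self]

/-- In the Lie coalgebra with de¹ = -e³∧e⁵, de² = -e³∧e⁴, de³ = de⁴ = de⁵ = de⁶ = 0,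
the real part Re Ω = e¹∧e²∧e³ - e¹∧e⁵∧e⁶ - e⁴∧e²∧e⁶ - e⁴∧e⁵∧e³ of
Ω = (e¹+ie⁴)∧(e²+ie⁵)∧(e³+ie⁶) is closed. -/
theorem stmt13
    (d : ExteriorAlgebra ℝ (Fin 6 → ℝ) →ₗ[ℝ] ExteriorAlgebra ℝ (Fin 6 → ℝ))
    (hone : d 1 = 0)
    (hder : ∀ (x : Fin 6 → ℝ) (ω : ExteriorAlgebra ℝ (Fin 6 → ℝ)),
      d (ExteriorAlgebra.ι ℝ x * ω) = d (ExteriorAlgebra.ι ℝ x) * ω -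
        ExteriorAlgebra.ι ℝ x * d ω)
    (h1 : d (e 0) = -(e 2 * e 4))
    (h2 : d (e 1) = -(e 2 * e 3))
    (h3 : d (e 2) = 0) (h4 : d (e 3) = 0) (h5 : d (e 4) = 0) (h6 : d (e 5) = 0) :
    d (e 0 * e 1 * e 2 - e 0 * e 4 * e 5 - e 3 * e 1 * e 5 - e 3 * e 4 * e 2) = 0 :=
  stmt13_general d hder h1 h2 h3 h4 h5 h6
end

section
/- In the Lie coalgebra with structure equations de¹ = 0, de² = -e²∧e⁴ - e¹∧e⁶, de³ = e³∧e⁴ - e¹∧e⁵, de⁴ = 0, de⁵ = -e⁴∧e⁵, de⁶ = e⁴∧e⁶, the 2-form ω = e¹∧e⁴ + e²∧e⁵ + e³∧e⁶ is closed and the real part of Ω = (e¹+ie⁴)∧(e²+ie⁵)∧(e³+ie⁶) is closed (a type IIA structure on the algebra (16+35, -26+45, 36, -46, 0, 0)). -/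
/-!
The differential is determined by the Leibniz rule from its values on the generators, and
those values are 2-forms. Since the Leibniz rule with a 2-form carries no sign, `d ∘ d` is
left-linear over the exterior algebra: `d (d (x ∧ ω)) = d (d x) ∧ ω + x ∧ d (d ω)`. So
`d ∘ d = 0` reduces to `d (d eᵢ) = 0` for the six generators (the Jacobi identity), and
closedness of `ω` and `Re Ω` is a direct expansion in the anticommuting `eᵢ`.
-/

open ExteriorAlgebra

namespace ExteriorAlgebra

variable {R M : Type*} [CommRing R] [AddCommGroup M] [Module R M]
  {d : ExteriorAlgebra R M →ₗ[R] ExteriorAlgebra R M}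

theorem ι_mul_ι_mem_exteriorPower_two (a b : M) : ι R a * ι R b ∈ ⋀[R]^2 M := by
  rw [exteriorPower, pow_two]
  exact Submodule.mul_mem_mul (LinearMap.mem_range_self _ _) (LinearMap.mem_range_self _ _)

theorem map_mul_of_mem_exteriorPower_two
    (hder : ∀ x ω, d (ι R x * ω) = d (ι R x) * ω - ι R x * d ω)
    {θ : ExteriorAlgebra R M} (hθ : θ ∈ ⋀[R]^2 M) (ω : ExteriorAlgebra R M) :
    d (θ * ω) = d θ * ω + θ * d ω := by
  rw [exteriorPower, pow_two] at hθ
  refine Submodule.mul_induction_on hθ ?_ ?_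
  · rintro _ ⟨a, rfl⟩ _ ⟨b, rfl⟩
    rw [mul_assoc, hder, hder, hder]
    noncomm_ring
  · intro θ₁ θ₂ h₁ h₂
    simp only [add_mul, map_add, h₁, h₂]
    abel

theorem map_map_ι_mul
    (hder : ∀ x ω, d (ι R x * ω) = d (ι R x) * ω - ι R x * d ω)
    (hdeg : ∀ x, d (ι R x) ∈ ⋀[R]^2 M) (x : M) (ω : ExteriorAlgebra R M) :
    d (d (ι R x * ω)) = d (d (ι R x)) * ω + ι R x * d (d ω) := by
  rw [hder, map_sub, map_mul_of_mem_exteriorPower_two hder (hdeg x), hder]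
  abel

theorem comp_self_eq_zero_of_span {ι' : Type*} {v : ι' → M}
    (hv : Submodule.span R (Set.range v) = ⊤) (hone : d 1 = 0)
    (hder : ∀ x ω, d (ι R x * ω) = d (ι R x) * ω - ι R x * d ω)
    (hdeg : ∀ i, d (ι R (v i)) ∈ ⋀[R]^2 M) (hdd : ∀ i, d (d (ι R (v i))) = 0) :
    d ∘ₗ d = 0 := by
  have hdeg' (x : M) : d (ι R x) ∈ ⋀[R]^2 M := by
    have hspan : Submodule.span R (Set.range v) ≤ (⋀[R]^2 M).comap (d ∘ₗ ι R) :=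
      Submodule.span_le.2 (Set.range_subset_iff.2 hdeg)
    exact hspan (hv ▸ Submodule.mem_top)
  have hdd' (x : M) : d (d (ι R x)) = 0 :=
    LinearMap.congr_fun (LinearMap.ext_on_range (g := 0) hv hdd : d ∘ₗ d ∘ₗ ι R = 0) x
  have hmul : ∀ a ω, d (d (a * ω)) = a * d (d ω) := by
    intro a
    induction a using ExteriorAlgebra.induction with
    | algebraMap r => simp [Algebra.algebraMap_eq_smul_one]
    | ι x =>
      intro ω
      rw [map_map_ι_mul hder hdeg', hdd', zero_mul, zero_add]
    | mul a b ha hb => intro ω; rw [mul_assoc, ha, hb, mul_assoc]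
    | add a b ha hb => intro ω; rw [add_mul, map_add, map_add, ha, hb, add_mul]
  exact LinearMap.ext fun a => by simpa [hone] using hmul a 1

end ExteriorAlgebra

theorem e_mul_self (i : Fin 6) : e i * e i = 0 := ι_sq_zero _

theorem e_mul_e_mul_self (i : Fin 6) (x : ExteriorAlgebra ℝ (Fin 6 → ℝ)) :
    e i * (e i * x) = 0 := by
  rw [← mul_assoc, e_mul_self, zero_mul]

theorem e_mul_comm (i j : Fin 6) : e i * e j = -(e j * e i) :=
  eq_neg_of_add_eq_zero_left (ι_add_mul_swap _ _)

theorem e_mul_e_mul_comm (i j : Fin 6) (x : ExteriorAlgebra ℝ (Fin 6 → ℝ)) :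
    e i * (e j * x) = -(e j * (e i * x)) := by
  rw [← mul_assoc, e_mul_comm, ← mul_assoc, neg_mul]

theorem e_mul_e_mem_exteriorPower_two (i j : Fin 6) : e i * e j ∈ ⋀[ℝ]^2 (Fin 6 → ℝ) :=
  ι_mul_ι_mem_exteriorPower_two _ _

theorem span_range_single_one :
    Submodule.span ℝ (Set.range fun i : Fin 6 => (Pi.single i 1 : Fin 6 → ℝ)) = ⊤ := by
  simpa only [← Pi.basisFun_apply ℝ (Fin 6)] using (Pi.basisFun ℝ (Fin 6)).span_eq

/-- In the Lie coalgebra with de¹ = 0, de² = -e²∧e⁴ - e¹∧e⁶, de³ = e³∧e⁴ - e¹∧e⁵,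
de⁴ = 0, de⁵ = -e⁴∧e⁵, de⁶ = e⁴∧e⁶ (the algebra (16+35,-26+45,36,-46,0,0)), the
Chevalley–Eilenberg differential satisfies d² = 0 (Jacobi), ω = e¹∧e⁴+e²∧e⁵+e³∧e⁶
is closed, and Re Ω = e¹∧e²∧e³ - e¹∧e⁵∧e⁶ - e⁴∧e²∧e⁶ - e⁴∧e⁵∧e³ is closed. -/
theorem stmt17
    (d : ExteriorAlgebra ℝ (Fin 6 → ℝ) →ₗ[ℝ] ExteriorAlgebra ℝ (Fin 6 → ℝ))
    (hone : d 1 = 0)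
    (hder : ∀ (x : Fin 6 → ℝ) (ω : ExteriorAlgebra ℝ (Fin 6 → ℝ)),
      d (ExteriorAlgebra.ι ℝ x * ω) = d (ExteriorAlgebra.ι ℝ x) * ω -
        ExteriorAlgebra.ι ℝ x * d ω)
    (h1 : d (e 0) = 0)
    (h2 : d (e 1) = -(e 1 * e 3) - e 0 * e 5)
    (h3 : d (e 2) = e 2 * e 3 - e 0 * e 4)
    (h4 : d (e 3) = 0)
    (h5 : d (e 4) = -(e 3 * e 4))
    (h6 : d (e 5) = e 3 * e 5) :
    d ∘ₗ d = 0 ∧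
      d (e 0 * e 3 + e 1 * e 4 + e 2 * e 5) = 0 ∧
      d (e 0 * e 1 * e 2 - e 0 * e 4 * e 5 - e 3 * e 1 * e 5 - e 3 * e 4 * e 2) = 0 := by
  have hder' (i : Fin 6) (ω) : d (e i * ω) = d (e i) * ω - e i * d ω := hder _ ω
  have hdeg (i : Fin 6) : d (e i) ∈ ⋀[ℝ]^2 (Fin 6 → ℝ) := by
    fin_cases i <;>
      simp only [Fin.zero_eta, Fin.mk_one, Fin.reduceFinMk, h1, h2, h3, h4, h5, h6] <;>
      apply_rules [sub_mem, neg_mem, zero_mem, e_mul_e_mem_exteriorPower_two]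
  have hjacobi (i : Fin 6) : d (d (e i)) = 0 := by
    fin_cases i <;>
      simp only [Fin.zero_eta, Fin.mk_one, Fin.reduceFinMk, h1, h2, h3, h4, h5, h6, hder', map_sub,
        map_neg, map_zero, sub_mul, neg_mul, mul_neg, mul_assoc, mul_zero, zero_mul, e_mul_self,
        e_mul_e_mul_self, e_mul_comm 5 3, e_mul_comm 4 3] <;>
      abel
  refine ⟨comp_self_eq_zero_of_span span_range_single_one hone hder hdeg hjacobi, ?_, ?_⟩
  · simp only [h1, h2, h3, h4, h5, h6, hder', map_add, sub_mul, neg_mul, mul_neg,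
      mul_assoc, mul_zero, zero_mul, e_mul_comm 5 4]
    abel
  · simp only [h1, h2, h3, h4, h5, h6, hder', map_sub, map_neg, sub_mul, neg_mul, mul_sub, mul_neg,
      mul_assoc, mul_zero, zero_mul, e_mul_self, e_mul_e_mul_self, e_mul_comm 3 1, e_mul_comm 3 2,
      e_mul_comm 4 2, e_mul_comm 5 2, e_mul_e_mul_comm 1 0, e_mul_e_mul_comm 3 2,
      e_mul_e_mul_comm 4 3, e_mul_e_mul_comm 5 3]
    abel
end

section
/- Let t be a real number with e^t + e^{-t} an integer greater than 2. The set Γ_t of 4×4 matrices of the form [[e^{tn₁},0,0,n₂+e^t n₃],[0,e^{-tn₁},0,n₂+e^{-t}n₃],[0,0,1,tn₁],[0,0,0,1]] with n₁,n₂,n₃ ∈ ℤ is closed under matrix multiplication and inversion, i.e. forms a subgroup of GL(4,ℝ). -/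
/-- The set Γ_t of 4×4 matrices of the form
[[e^{tn₁},0,0,n₂+e^t n₃],[0,e^{-tn₁},0,n₂+e^{-t}n₃],[0,0,1,tn₁],[0,0,0,1]],
n₁,n₂,n₃ ∈ ℤ, inside E(1,1) ⊂ GL(4,ℝ). -/
noncomputable def GammaSet (t : ℝ) : Set (Matrix (Fin 4) (Fin 4) ℝ) :=
  {M | ∃ n₁ n₂ n₃ : ℤ,
    M = !![Real.exp (t * n₁), 0, 0, (n₂ : ℝ) + Real.exp t * (n₃ : ℝ);
           0, Real.exp (-(t * n₁)), 0, (n₂ : ℝ) + Real.exp (-t) * (n₃ : ℝ);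
           0, 0, 1, t * n₁;
           0, 0, 0, 1]}

/-!
Each element of Γ_t is an element `(d, w, s)` of E(1,1) = (ℝ × ℝ) ⋊ ℝ, with diagonal part
`d = (e^{tn}, e^{-tn})`, translation part `w = (a + e^t b, a + e^{-t} b)` and `s = tn`; the group law
is `(d, w, s) (d', w', s') = (d d', w + d w', s + s')`. Since `e^t` and `e^{-t}` are both roots of
`X² - mX + 1` with `m = e^t + e^{-t} ∈ ℤ`, the pairs `(a + e^t b, a + e^{-t} b)` with `a, b ∈ ℤ` form a
subring of `ℝ × ℝ`. It contains `(e^t, e^{-t})` and its inverse `(m - e^t, m - e^{-t})`, hence every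
diagonal part `d`, so products and inverses of elements of Γ_t have their translation parts in it.
-/

open Real

section E11

variable {R : Type*} [Semiring R]

def e11Matrix (d w : R × R) (s : R) : Matrix (Fin 4) (Fin 4) R :=
  !![d.1, 0, 0, w.1; 0, d.2, 0, w.2; 0, 0, 1, s; 0, 0, 0, 1]

theorem e11Matrix_mul (d w d' w' : R × R) (s s' : R) :
    e11Matrix d w s * e11Matrix d' w' s' = e11Matrix (d * d') (w + d * w') (s + s') := by
  ext i j
  fin_cases i <;> fin_cases j <;> simp [e11Matrix, Matrix.mul_apply, Fin.sum_univ_four, add_comm]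

theorem e11Matrix_one : e11Matrix (1 : R × R) 0 0 = 1 := by
  ext i j
  fin_cases i <;> fin_cases j <;> simp [e11Matrix]

end E11

section RootPairs

variable {R : Type*} [CommRing R]

def rootPairs (α β : R) : Set (R × R) :=
  {p | ∃ a b : ℤ, p = (a + α * b, a + β * b)}

def rootPairSubring (α β : R) (m c : ℤ) (hα : α ^ 2 = m * α + c) (hβ : β ^ 2 = m * β + c) :
    Subring (R × R) where
  carrier := rootPairs α β
  zero_mem' := ⟨0, 0, by ext <;> simp⟩
  one_mem' := ⟨1, 0, by ext <;> simp⟩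
  add_mem' := by
    rintro _ _ ⟨a, b, rfl⟩ ⟨a', b', rfl⟩
    exact ⟨a + a', b + b', by ext <;> simp only [Prod.fst_add, Prod.snd_add] <;> push_cast <;> ring⟩
  neg_mem' := by
    rintro _ ⟨a, b, rfl⟩
    exact ⟨-a, -b, by ext <;> simp only [Prod.fst_neg, Prod.snd_neg] <;> push_cast <;> ring⟩
  mul_mem' := by
    rintro _ _ ⟨a, b, rfl⟩ ⟨a', b', rfl⟩
    refine ⟨a * a' + c * b * b', a * b' + a' * b + m * b * b', ?_⟩
    ext <;> simp only [Prod.fst_mul, Prod.snd_mul] <;> push_cast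
    · linear_combination (b * b' : R) * hα
    · linear_combination (b * b' : R) * hβ

end RootPairs

section ExpPair

noncomputable def expPair (s : ℝ) : (ℝ × ℝ)ˣ where
  val := (exp s, exp (-s))
  inv := (exp (-s), exp s)
  val_inv := by ext <;> simp [← exp_add]
  inv_val := by ext <;> simp [← exp_add]

theorem expPair_add (s s' : ℝ) : expPair (s + s') = expPair s * expPair s' :=
  Units.ext <| Prod.ext (exp_add s s') (by simp [expPair, exp_add, mul_comm])

theorem expPair_neg (s : ℝ) : expPair (-s) = (expPair s)⁻¹ :=
  Units.ext <| Prod.ext rfl (by simp [expPair])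

theorem expPair_mul_intCast (t : ℝ) (n : ℤ) : expPair (t * n) = expPair t ^ n := by
  induction n using Int.induction_on with
  | zero => ext <;> simp [expPair]
  | succ k ih => rw [zpow_add_one, ← ih, ← expPair_add]; push_cast; ring_nf
  | pred k ih => rw [zpow_sub_one, ← ih, ← expPair_neg, ← expPair_add]; push_cast; ring_nf

theorem expPair_mul_intCast_mem {S : Submonoid (ℝ × ℝ)} {t : ℝ} (h : (expPair t : ℝ × ℝ) ∈ S)
    (h' : (expPair (-t) : ℝ × ℝ) ∈ S) (n : ℤ) : (expPair (t * n) : ℝ × ℝ) ∈ S := by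
  have hu : expPair t ∈ S.units := S.mem_units_of_val_mem_inv_val_mem h (by rwa [← expPair_neg])
  rw [expPair_mul_intCast]
  exact (zpow_mem hu n).1

end ExpPair

theorem gammaSet_eq (t : ℝ) :
    GammaSet t = {M | ∃ n : ℤ, ∃ w ∈ rootPairs (exp t) (exp (-t)),
      M = e11Matrix (expPair (t * n) : ℝ × ℝ) w (t * n)} := by
  ext M
  simp only [GammaSet, rootPairs, e11Matrix, Set.mem_ofPred_eq]
  constructor
  · rintro ⟨n₁, n₂, n₃, rfl⟩
    exact ⟨n₁, _, ⟨n₂, n₃, rfl⟩, rfl⟩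
  · rintro ⟨n₁, _, ⟨n₂, n₃, rfl⟩, rfl⟩
    exact ⟨n₁, n₂, n₃, rfl⟩

/-- If e^t + e^{-t} is an integer greater than 2, then Γ_t is closed under matrix
multiplication and inversion, i.e. forms a subgroup of GL(4,ℝ). -/
theorem stmt19 (t : ℝ) (h : ∃ m : ℤ, (m : ℝ) = Real.exp t + Real.exp (-t) ∧ 2 < m) :
    (∀ A ∈ GammaSet t, ∀ B ∈ GammaSet t, A * B ∈ GammaSet t) ∧
      (∀ A ∈ GammaSet t, ∃ B ∈ GammaSet t, A * B = 1 ∧ B * A = 1) := by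
  obtain ⟨m, hm, -⟩ := h
  have hprod : exp t * exp (-t) = 1 := by rw [← exp_add, add_neg_cancel, exp_zero]
  let S := rootPairSubring (exp t) (exp (-t)) m (-1)
    (by linear_combination -exp t * hm - hprod) (by linear_combination -exp (-t) * hm - hprod)
  have hS : ∀ n : ℤ, (expPair (t * n) : ℝ × ℝ) ∈ S :=
    expPair_mul_intCast_mem (S := S.toSubmonoid) ⟨0, 1, by simp [expPair]⟩
      ⟨m, -1, by ext <;> simp [expPair, hm]⟩
  rw [gammaSet_eq]
  refine ⟨?_, ?_⟩
  · rintro _ ⟨n, w, hw, rfl⟩ _ ⟨k, w', hw', rfl⟩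
    refine ⟨n + k, _, S.add_mem hw (S.mul_mem (hS n) hw'), ?_⟩
    rw [e11Matrix_mul, ← Units.val_mul, ← expPair_add, Int.cast_add, mul_add]
  · rintro _ ⟨n, w, hw, rfl⟩
    refine ⟨_, ⟨-n, _, S.neg_mem (S.mul_mem (hS (-n)) hw), rfl⟩, ?_, ?_⟩
    all_goals
      rw [e11Matrix_mul, ← e11Matrix_one]
      push_cast
      simp [expPair_neg]
end
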